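/- arXiv:1106.3408 — 4 statements merged into one kernel-verified Lean document; each statement's English description precedes it below -/
import Mathlib

section
/- Every Bessel sequence of unit vectors in a Hilbert space can be partitioned into finitely many separated Bessel sequences, i.e., there exists a finite partition of the index set such that on each part the subsequence is separated (with some constant γ < 1). -/
/-! Join two indices when the inner product of their vectors exceeds `1/2` in modulus.
The Bessel bound implies the dual bound `∑ₘ |⟪y, x m⟫|² ≤ B ‖y‖²` (test it with
`aₘ = ⟪x m, y⟫`); taking `y = x n` shows that each vertex has fewer than `4B` neighbours, so a
greedy colouring along `ℕ` needs at most `⌈4B⌉` colours. Every colour class is then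
`1/2`-separated, and it is Bessel with the same bound as the whole sequence. -/
open Finset

namespace SimpleGraph
variable (G : SimpleGraph ℕ) [DecidableRel G.Adj]

/-- The fallback colour `0` is never used at a vertex with fewer than `N` earlier neighbours. -/
noncomputable def greedyColoring (N : ℕ) [NeZero N] (n : ℕ) : Fin N :=
  let used := {m ∈ range n | G.Adj n m}.attach.image fun m => greedyColoring N m.1
  if h : usedᶜ.Nonempty then usedᶜ.min' h else 0
decreasing_by exact mem_range.1 (mem_filter.1 m.2).1

variable {G}

theorem greedyColoring_ne_of_adj {N : ℕ} [NeZero N] {m n : ℕ}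
    (hn : #{k ∈ range n | G.Adj n k} < N) (hmn : m < n) (hadj : G.Adj n m) :
    G.greedyColoring N m ≠ G.greedyColoring N n := by
  conv_rhs => rw [greedyColoring]
  set used := {k ∈ range n | G.Adj n k}.attach.image fun k => G.greedyColoring N k.1
  have hfree : usedᶜ.Nonempty := by
    rw [← card_pos, card_compl, Fintype.card_fin]
    have : #used < N := card_image_le.trans_lt (card_attach.trans_lt hn)
    omega
  have hm : G.greedyColoring N m ∈ used :=
    mem_image.2 ⟨⟨m, mem_filter.2 ⟨mem_range.2 hmn, hadj⟩⟩, mem_attach _ _, rfl⟩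
  rw [dif_pos hfree]
  exact fun h => (mem_compl.1 (usedᶜ.min'_mem hfree)) (h ▸ hm)

theorem colorable_of_forall_card_lt {N : ℕ} (h : ∀ n, #{k ∈ range n | G.Adj n k} < N) :
    G.Colorable N := by
  have : NeZero N := NeZero.of_pos (pos_of_gt (h 0))
  refine ⟨Coloring.mk (G.greedyColoring N) fun {m n} hadj => ?_⟩
  rcases lt_or_gt_of_ne hadj.ne with hmn | hnm
  · exact greedyColoring_ne_of_adj (h n) hmn hadj.symm
  · exact (greedyColoring_ne_of_adj (h m) hnm hadj).symm

end SimpleGraph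

section Bessel
variable {𝕜 ι E : Type*} [RCLike 𝕜] [NormedAddCommGroup E] [InnerProductSpace 𝕜 E]
  {x : ι → E} {B : ℝ}

theorem sum_norm_inner_sq_le_of_bessel (hB : 0 ≤ B)
    (hx : ∀ (s : Finset ι) (a : ι → 𝕜), ‖∑ n ∈ s, a n • x n‖ ^ 2 ≤ B * ∑ n ∈ s, ‖a n‖ ^ 2)
    (y : E) (s : Finset ι) :
    ∑ m ∈ s, ‖(inner 𝕜 y (x m) : 𝕜)‖ ^ 2 ≤ B * ‖y‖ ^ 2 := by
  set T := ∑ m ∈ s, ‖(inner 𝕜 y (x m) : 𝕜)‖ ^ 2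
  set v := ∑ m ∈ s, (inner 𝕜 (x m) y : 𝕜) • x m
  have hyv : (inner 𝕜 y v : 𝕜) = T := by
    simp only [v, T, inner_sum, inner_smul_right]
    push_cast
    refine sum_congr rfl fun m _ => ?_
    rw [← inner_conj_symm, RCLike.conj_mul]
  have hv : ‖v‖ ^ 2 ≤ B * T := by
    simpa only [norm_inner_symm] using hx s fun m => inner 𝕜 (x m) y
  have hT : T * T ≤ (B * ‖y‖ ^ 2) * T := calc
    T * T = ‖(inner 𝕜 y v : 𝕜)‖ ^ 2 := by
      rw [hyv, RCLike.norm_ofReal, sq_abs, sq]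
    _ ≤ ‖y‖ ^ 2 * ‖v‖ ^ 2 := by
      rw [← mul_pow]; exact pow_le_pow_left₀ (norm_nonneg _) (norm_inner_le_norm _ _) 2
    _ ≤ ‖y‖ ^ 2 * (B * T) := by gcongr
    _ = (B * ‖y‖ ^ 2) * T := by ring
  have hT0 : 0 ≤ T := sum_nonneg fun m _ => sq_nonneg _
  rcases hT0.eq_or_lt with h0 | hpos
  · rw [← h0]; positivity
  · exact le_of_mul_le_mul_right hT hpos

variable (𝕜) in
def correlationGraph (x : ι → E) (γ : ℝ) : SimpleGraph ι where
  Adj n m := n ≠ m ∧ γ < ‖(inner 𝕜 (x n) (x m) : 𝕜)‖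
  symm := ⟨fun _ _ h => ⟨h.1.symm, norm_inner_symm (𝕜 := 𝕜) (x _) (x _) ▸ h.2⟩⟩
  loopless := ⟨fun _ h => h.1 rfl⟩

theorem card_mul_sq_add_one_le_of_bessel {γ : ℝ} (hunit : ∀ n, ‖x n‖ = 1) (hB : 0 ≤ B)
    (hx : ∀ (s : Finset ι) (a : ι → 𝕜), ‖∑ n ∈ s, a n • x n‖ ^ 2 ≤ B * ∑ n ∈ s, ‖a n‖ ^ 2)
    (hγ : 0 ≤ γ) {n : ι} {s : Finset ι} (hs : ∀ m ∈ s, (correlationGraph 𝕜 x γ).Adj n m) :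
    #s * γ ^ 2 + 1 ≤ B := by
  classical
  have hns : n ∉ s := fun h => (hs n h).1 rfl
  have hself : ‖(inner 𝕜 (x n) (x n) : 𝕜)‖ ^ 2 = 1 := by
    rw [inner_self_eq_norm_sq_to_K, hunit]; simp
  calc #s * γ ^ 2 + 1 ≤ ∑ m ∈ s, ‖(inner 𝕜 (x n) (x m) : 𝕜)‖ ^ 2 + 1 := by
        gcongr
        simpa only [nsmul_eq_mul] using card_nsmul_le_sum s _ _ fun m hm =>
          pow_le_pow_left₀ hγ (hs m hm).2.le 2
    _ = ∑ m ∈ insert n s, ‖(inner 𝕜 (x n) (x m) : 𝕜)‖ ^ 2 := by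
        rw [sum_insert hns, hself, add_comm]
    _ ≤ B * ‖x n‖ ^ 2 := sum_norm_inner_sq_le_of_bessel hB hx _ _
    _ = B := by rw [hunit, one_pow, mul_one]

end Bessel

theorem bessel_partition_into_separated_general
    {H : Type*} [NormedAddCommGroup H] [InnerProductSpace ℂ H]
    (x : ℕ → H) (hunit : ∀ n, ‖x n‖ = 1)
    (hBessel : ∃ B > 0, ∀ (s : Finset ℕ) (a : ℕ → ℂ),
      ‖∑ n ∈ s, a n • x n‖ ^ 2 ≤ B * ∑ n ∈ s, ‖a n‖ ^ 2) :
    ∃ (N : ℕ) (f : ℕ → Fin N),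
      (∀ c : Fin N, ∃ B > 0, ∀ (s : Finset ℕ) (a : ℕ → ℂ), (∀ n ∈ s, f n = c) →
        ‖∑ n ∈ s, a n • x n‖ ^ 2 ≤ B * ∑ n ∈ s, ‖a n‖ ^ 2) ∧
      (∀ c : Fin N, ∃ γ < (1 : ℝ), ∀ n m, n ≠ m → f n = c → f m = c →
        ‖(inner ℂ (x n) (x m) : ℂ)‖ ≤ γ) := by
  classical
  obtain ⟨B, hB, hx⟩ := hBessel
  obtain ⟨c⟩ : (correlationGraph ℂ x (1 / 2)).Colorable ⌈4 * B⌉₊ := by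
    refine SimpleGraph.colorable_of_forall_card_lt fun n => ?_
    set s := {k ∈ range n | (correlationGraph ℂ x (1 / 2)).Adj n k}
    have hdeg : #s * (1 / 2 : ℝ) ^ 2 + 1 ≤ B :=
      card_mul_sq_add_one_le_of_bessel hunit hB.le hx (by norm_num) fun k hk => (mem_filter.1 hk).2
    have hceil := Nat.le_ceil (4 * B)
    exact_mod_cast (by linarith : (#s : ℝ) < ⌈4 * B⌉₊)
  refine ⟨_, c, fun _ => ⟨B, hB, fun s a _ => hx s a⟩,
    fun _ => ⟨1 / 2, by norm_num, fun n m hnm hn hm => ?_⟩⟩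
  by_contra! hlarge
  exact c.valid ⟨hnm, hlarge⟩ (hn.trans hm.symm)

theorem bessel_partition_into_separated
    {H : Type*} [NormedAddCommGroup H] [InnerProductSpace ℂ H] [CompleteSpace H]
    (x : ℕ → H) (hunit : ∀ n, ‖x n‖ = 1)
    (hBessel : ∃ B > 0, ∀ (s : Finset ℕ) (a : ℕ → ℂ),
      ‖∑ n ∈ s, a n • x n‖ ^ 2 ≤ B * ∑ n ∈ s, ‖a n‖ ^ 2) :
    ∃ (N : ℕ) (f : ℕ → Fin N),
      (∀ c : Fin N, ∃ B > 0, ∀ (s : Finset ℕ) (a : ℕ → ℂ), (∀ n ∈ s, f n = c) →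
        ‖∑ n ∈ s, a n • x n‖ ^ 2 ≤ B * ∑ n ∈ s, ‖a n‖ ^ 2) ∧
      (∀ c : Fin N, ∃ γ < (1 : ℝ), ∀ n m, n ≠ m → f n = c → f m = c →
        ‖(inner ℂ (x n) (x m) : ℂ)‖ ≤ γ) :=
  bessel_partition_into_separated_general x hunit hBessel
end

section
/- Let (xₙ) be a sequence of nonzero vectors in a Hilbert space H and A : H → H' an invertible bounded operator; set x'ₙ = A xₙ. Then the normalized sequence (xₙ/‖xₙ‖) is a Bessel sequence if and only if (x'ₙ/‖x'ₙ‖) is a Bessel sequence. -/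
/-! With `u n = ‖x n‖⁻¹ • x n`, each normalized image vector is a rescaling of `A (u n)`,
`‖A (x n)‖⁻¹ • A (x n) = (‖x n‖ / ‖A (x n)‖) • A (u n)`, by a factor at most `‖A⁻¹‖`.
Bounded operators and bounded scalar multipliers both preserve the Bessel property, and the
converse is the same argument applied to `A⁻¹`. -/

open Finset

section Bessel

variable {ι 𝕜 E F : Type*} [NontriviallyNormedField 𝕜]
  [SeminormedAddCommGroup E] [NormedSpace 𝕜 E] [SeminormedAddCommGroup F] [NormedSpace 𝕜 F]

variable (𝕜) in
def IsBesselSeq (y : ι → E) : Prop :=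
  ∃ B ≥ 0, ∀ (s : Finset ι) (a : ι → 𝕜), ‖∑ n ∈ s, a n • y n‖ ^ 2 ≤ B * ∑ n ∈ s, ‖a n‖ ^ 2

theorem isBesselSeq_iff_exists_pos {y : ι → E} :
    IsBesselSeq 𝕜 y ↔ ∃ B > 0, ∀ (s : Finset ι) (a : ι → 𝕜),
      ‖∑ n ∈ s, a n • y n‖ ^ 2 ≤ B * ∑ n ∈ s, ‖a n‖ ^ 2 :=
  ⟨fun ⟨B, hB, h⟩ => ⟨B + 1, by positivity, fun s a => (h s a).trans (by gcongr; linarith)⟩,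
    fun ⟨B, hB, h⟩ => ⟨B, hB.le, h⟩⟩

theorem IsBesselSeq.map {y : ι → E} (hy : IsBesselSeq 𝕜 y) (T : E →L[𝕜] F) :
    IsBesselSeq 𝕜 fun n => T (y n) := by
  obtain ⟨B, hB, h⟩ := hy
  refine ⟨‖T‖ ^ 2 * B, by positivity, fun s a => ?_⟩
  calc ‖∑ n ∈ s, a n • T (y n)‖ ^ 2 = ‖T (∑ n ∈ s, a n • y n)‖ ^ 2 := by
        simp only [map_sum, map_smul]
    _ ≤ (‖T‖ * ‖∑ n ∈ s, a n • y n‖) ^ 2 := by gcongr; exact T.le_opNorm _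
    _ = ‖T‖ ^ 2 * ‖∑ n ∈ s, a n • y n‖ ^ 2 := mul_pow _ _ _
    _ ≤ ‖T‖ ^ 2 * (B * ∑ n ∈ s, ‖a n‖ ^ 2) := by gcongr; exact h s a
    _ = ‖T‖ ^ 2 * B * ∑ n ∈ s, ‖a n‖ ^ 2 := (mul_assoc _ _ _).symm

theorem IsBesselSeq.smul {y : ι → E} (hy : IsBesselSeq 𝕜 y) {c : ι → 𝕜} {M : ℝ}
    (hc : ∀ n, ‖c n‖ ≤ M) : IsBesselSeq 𝕜 fun n => c n • y n := by
  obtain ⟨B, hB, h⟩ := hy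
  refine ⟨B * M ^ 2, by positivity, fun s a => ?_⟩
  have hcoef : ∀ n, ‖a n * c n‖ ^ 2 ≤ M ^ 2 * ‖a n‖ ^ 2 := fun n => by
    rw [norm_mul, mul_pow, mul_comm]
    gcongr
    exact hc n
  calc ‖∑ n ∈ s, a n • c n • y n‖ ^ 2 = ‖∑ n ∈ s, (a n * c n) • y n‖ ^ 2 := by
        simp only [mul_smul]
    _ ≤ B * ∑ n ∈ s, ‖a n * c n‖ ^ 2 := h s _
    _ ≤ B * ∑ n ∈ s, M ^ 2 * ‖a n‖ ^ 2 := by gcongr with n; exact hcoef n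
    _ = B * M ^ 2 * ∑ n ∈ s, ‖a n‖ ^ 2 := by rw [← mul_sum, mul_assoc]

theorem ContinuousLinearEquiv.norm_div_norm_apply_le (A : E ≃L[𝕜] F) (v : E) :
    ‖v‖ / ‖A v‖ ≤ ‖(A.symm : F →L[𝕜] E)‖ :=
  div_le_of_le_mul₀ (norm_nonneg _) (norm_nonneg _) <| by
    simpa using (A.symm : F →L[𝕜] E).le_opNorm (A v)

end Bessel

section Normalize

variable {ι 𝕜 E F : Type*} [RCLike 𝕜]
  [NormedAddCommGroup E] [NormedSpace 𝕜 E] [NormedSpace ℝ E] [IsScalarTower ℝ 𝕜 E]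
  [NormedAddCommGroup F] [NormedSpace 𝕜 F] [NormedSpace ℝ F] [IsScalarTower ℝ 𝕜 F]

theorem ContinuousLinearMap.inv_norm_smul_apply (T : E →L[𝕜] F) (v : E) :
    ‖T v‖⁻¹ • T v = (‖v‖ / ‖T v‖) • T (‖v‖⁻¹ • v) := by
  rcases eq_or_ne v 0 with rfl | hv
  · simp
  rw [T.map_smul_of_tower, smul_smul, div_mul_eq_mul_div, mul_inv_cancel₀ (norm_ne_zero_iff.2 hv),
    one_div]

theorem IsBesselSeq.normalize_map {y : ι → E} (hy : IsBesselSeq 𝕜 fun n => ‖y n‖⁻¹ • y n)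
    (A : E ≃L[𝕜] F) : IsBesselSeq 𝕜 fun n => ‖A (y n)‖⁻¹ • A (y n) := by
  have hrescale : ∀ n, ‖A (y n)‖⁻¹ • A (y n) =
      ((‖y n‖ / ‖A (y n)‖ : ℝ) : 𝕜) • A (‖y n‖⁻¹ • y n) := fun n => by
    rw [← RCLike.real_smul_eq_coe_smul]
    exact (A : E →L[𝕜] F).inv_norm_smul_apply (y n)
  simp only [hrescale]
  refine (hy.map (A : E →L[𝕜] F)).smul (M := ‖(A.symm : F →L[𝕜] E)‖) fun n => ?_
  rw [RCLike.norm_ofReal, abs_of_nonneg (by positivity)]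
  exact A.norm_div_norm_apply_le (y n)

theorem isBesselSeq_normalize_map_iff (y : ι → E) (A : E ≃L[𝕜] F) :
    (IsBesselSeq 𝕜 fun n => ‖A (y n)‖⁻¹ • A (y n)) ↔ IsBesselSeq 𝕜 fun n => ‖y n‖⁻¹ • y n :=
  ⟨fun h => by simpa using h.normalize_map A.symm, fun h => h.normalize_map A⟩

end Normalize

theorem bessel_invariant_under_invertible_general
    {H H' : Type*} [NormedAddCommGroup H] [InnerProductSpace ℂ H]
    [NormedAddCommGroup H'] [InnerProductSpace ℂ H']
    (x : ℕ → H) (A : H ≃L[ℂ] H') :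
    (∃ B > 0, ∀ (s : Finset ℕ) (a : ℕ → ℂ),
        ‖∑ n ∈ s, a n • (‖x n‖⁻¹ • x n)‖ ^ 2 ≤ B * ∑ n ∈ s, ‖a n‖ ^ 2) ↔
    (∃ B > 0, ∀ (s : Finset ℕ) (a : ℕ → ℂ),
        ‖∑ n ∈ s, a n • (‖A (x n)‖⁻¹ • A (x n))‖ ^ 2 ≤ B * ∑ n ∈ s, ‖a n‖ ^ 2) := by
  simpa only [isBesselSeq_iff_exists_pos] using (isBesselSeq_normalize_map_iff x A).symm

theorem bessel_invariant_under_invertible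
    {H H' : Type*} [NormedAddCommGroup H] [InnerProductSpace ℂ H] [CompleteSpace H]
    [NormedAddCommGroup H'] [InnerProductSpace ℂ H'] [CompleteSpace H']
    (x : ℕ → H) (hx : ∀ n, x n ≠ 0) (A : H ≃L[ℂ] H') :
    (∃ B > 0, ∀ (s : Finset ℕ) (a : ℕ → ℂ),
        ‖∑ n ∈ s, a n • (‖x n‖⁻¹ • x n)‖ ^ 2 ≤ B * ∑ n ∈ s, ‖a n‖ ^ 2) ↔
    (∃ B > 0, ∀ (s : Finset ℕ) (a : ℕ → ℂ),
        ‖∑ n ∈ s, a n • (‖A (x n)‖⁻¹ • A (x n))‖ ^ 2 ≤ B * ∑ n ∈ s, ‖a n‖ ^ 2) :=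
  bessel_invariant_under_invertible_general x A
end

section
/- The sequence fₙ(z) = (1 + cos t)^{1/2} e^{int}, n ∈ ℤ, in L²(𝕋) is a separated Bessel sequence of unit vectors that is not a Riesz sequence. -/
/-!
The Gram matrix of `(fₙ)` is the Toeplitz matrix of the Fourier coefficients of `1 + cos t`:
`⟪fₙ, fₘ⟫` is `1` for `m = n`, `1/2` for `m = n ± 1` and `0` otherwise. Off the diagonal it is
therefore at most `1/2`, and its absolute row sums are at most `2`, so the Schur test gives the
Bessel bound `2`. The lower Riesz bound fails because the weight `1 + cos t` vanishes at `t = π`: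
the alternating sums `∑_{k ≤ N} (-1)ᵏ fₖ` all have norm `1`, each new term having inner product
`-1/2` with the previous partial sum, while their coefficients have squared norm `N + 1`.
-/

open MeasureTheory Real

section

open Finset ComplexConjugate

/-- Schur test for a Gram matrix: since `‖⟪vₙ, vₘ⟫‖ = ‖⟪vₘ, vₙ⟫‖`, bounding the row sums also
bounds the column sums. -/
theorem norm_sum_smul_sq_le_of_sum_norm_inner_le {𝕜 E ι : Type*} [RCLike 𝕜]
    [NormedAddCommGroup E] [InnerProductSpace 𝕜 E] (v : ι → E) (s : Finset ι) {C : ℝ}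
    (hC : ∀ n ∈ s, ∑ m ∈ s, ‖(inner 𝕜 (v n) (v m) : 𝕜)‖ ≤ C) (a : ι → 𝕜) :
    ‖∑ n ∈ s, a n • v n‖ ^ 2 ≤ C * ∑ n ∈ s, ‖a n‖ ^ 2 := by
  set g : ι → ι → ℝ := fun n m => ‖(inner 𝕜 (v n) (v m) : 𝕜)‖
  have hg : ∀ n m, g n m = g m n := fun n m => norm_inner_symm _ _
  have hrow : ∑ n ∈ s, ∑ m ∈ s, ‖a n‖ ^ 2 * g n m ≤ C * ∑ n ∈ s, ‖a n‖ ^ 2 := by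
    rw [mul_sum]
    refine sum_le_sum fun n hn => ?_
    rw [← mul_sum, mul_comm]
    exact mul_le_mul_of_nonneg_right (hC n hn) (sq_nonneg _)
  have hcol : ∑ n ∈ s, ∑ m ∈ s, ‖a m‖ ^ 2 * g n m = ∑ n ∈ s, ∑ m ∈ s, ‖a n‖ ^ 2 * g n m := by
    rw [sum_comm]; simp only [hg]
  calc ‖∑ n ∈ s, a n • v n‖ ^ 2
      = ‖∑ n ∈ s, ∑ m ∈ s, conj (a n) * a m * inner 𝕜 (v n) (v m)‖ := by
        have hexpand : inner 𝕜 (∑ n ∈ s, a n • v n) (∑ n ∈ s, a n • v n) =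
            ∑ n ∈ s, ∑ m ∈ s, conj (a n) * a m * inner 𝕜 (v n) (v m) := by
          rw [sum_inner]
          simp only [inner_sum, inner_smul_left, inner_smul_right]
          exact sum_congr rfl fun _ _ => sum_congr rfl fun _ _ => by ring
        rw [← hexpand, inner_self_eq_norm_sq_to_K, norm_pow, RCLike.norm_ofReal, abs_norm]
    _ ≤ ∑ n ∈ s, ∑ m ∈ s, ‖a n‖ * ‖a m‖ * g n m := by
        refine (norm_sum_le _ _).trans (sum_le_sum fun n _ => (norm_sum_le _ _).trans ?_)
        simp [g]
    _ ≤ ∑ n ∈ s, ∑ m ∈ s, (‖a n‖ ^ 2 * g n m + ‖a m‖ ^ 2 * g n m) / 2 := by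
        gcongr with n _ m _
        nlinarith [sq_nonneg (‖a n‖ - ‖a m‖), norm_nonneg (inner 𝕜 (v n) (v m))]
    _ ≤ C * ∑ n ∈ s, ‖a n‖ ^ 2 := by
        simp only [← sum_div, sum_add_distrib, hcol]
        linarith

end

noncomputable def oneAddCosCoeff (k : ℤ) : ℂ :=
  if k = 0 then 1 else if k = 1 ∨ k = -1 then 1 / 2 else 0

lemma oneAddCosCoeff_zero : oneAddCosCoeff 0 = 1 := if_pos rfl

lemma oneAddCosCoeff_one : oneAddCosCoeff 1 = 1 / 2 := by simp [oneAddCosCoeff]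

lemma oneAddCosCoeff_of_two_le {k : ℤ} (hk : 2 ≤ k) : oneAddCosCoeff k = 0 := by
  rw [oneAddCosCoeff, if_neg (by omega), if_neg (by omega)]

lemma norm_oneAddCosCoeff_le_half {k : ℤ} (hk : k ≠ 0) : ‖oneAddCosCoeff k‖ ≤ 1 / 2 := by
  rw [oneAddCosCoeff, if_neg hk]
  split_ifs <;> norm_num

open Finset in
lemma sum_norm_oneAddCosCoeff_sub_le (s : Finset ℤ) (n : ℤ) :
    ∑ m ∈ s, ‖oneAddCosCoeff (m - n)‖ ≤ 2 := by
  have hsupp : ∀ m ∈ s, m ∉ s ∩ {n - 1, n, n + 1} → ‖oneAddCosCoeff (m - n)‖ = 0 := by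
    intro m hm hm'
    simp only [mem_inter, mem_insert, mem_singleton, not_and, not_or] at hm'
    obtain ⟨h1, h2, h3⟩ := hm' hm
    rw [oneAddCosCoeff, if_neg (by omega), if_neg (by omega), norm_zero]
  rw [← sum_subset inter_subset_left hsupp]
  refine (sum_le_sum_of_subset_of_nonneg inter_subset_right fun _ _ _ => norm_nonneg _).trans ?_
  rw [sum_insert (by simp; omega), sum_pair (by omega)]
  norm_num [oneAddCosCoeff]

section

open Complex ComplexConjugate

lemma integral_exp_int_mul_I (k : ℤ) :
    ∫ t in (0 : ℝ)..2 * π, exp (I * k * t) = if k = 0 then (2 * π : ℂ) else 0 := by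
  split_ifs with hk
  · simp [hk]
  · have hc : I * k ≠ 0 := by simp [hk]
    have hperiod : exp (I * k * ↑(2 * π)) = 1 := by
      rw [← exp_int_mul_two_pi_mul_I k]
      push_cast
      ring_nf
    rw [integral_exp_mul_complex hc, hperiod]
    simp

lemma ofReal_one_add_cos_mul_exp (k : ℤ) (t : ℝ) :
    ((1 + Real.cos t : ℝ) : ℂ) * exp (I * k * t) =
      exp (I * k * t) + exp (I * (k + 1 : ℤ) * t) / 2 + exp (I * (k - 1 : ℤ) * t) / 2 := by
  have hsucc : I * ((k + 1 : ℤ) : ℂ) * t = t * I + I * k * t := by push_cast; ring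
  have hpred : I * ((k - 1 : ℤ) : ℂ) * t = -t * I + I * k * t := by push_cast; ring
  rw [hsucc, hpred, Complex.exp_add, Complex.exp_add, ofReal_add, ofReal_one, ofReal_cos,
    Complex.cos]
  ring

lemma integral_one_add_cos_mul_exp (k : ℤ) :
    ∫ t in (0 : ℝ)..2 * π, ((1 + Real.cos t : ℝ) : ℂ) * exp (I * k * t) =
      2 * π * oneAddCosCoeff k := by
  have hint : ∀ j : ℤ, IntervalIntegrable (fun t : ℝ => exp (I * j * t)) volume 0 (2 * π) :=
    fun j => (by fun_prop : Continuous _).intervalIntegrable _ _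
  simp_rw [ofReal_one_add_cos_mul_exp]
  rw [intervalIntegral.integral_add ((hint _).add ((hint _).div_const _)) ((hint _).div_const _),
    intervalIntegral.integral_add (hint _) ((hint _).div_const _),
    intervalIntegral.integral_div, intervalIntegral.integral_div,
    integral_exp_int_mul_I, integral_exp_int_mul_I, integral_exp_int_mul_I, oneAddCosCoeff]
  split_ifs <;> first | omega | ring

lemma inner_eq_oneAddCosCoeff (μ : Measure ℝ)
    (hμ : μ = ENNReal.ofReal (1 / (2 * π)) • volume.restrict (Set.Ioc 0 (2 * π)))
    (f : ℤ → Lp ℂ 2 μ)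
    (hf : ∀ n : ℤ, (f n : ℝ → ℂ) =ᵐ[μ]
      fun t => (Real.sqrt (1 + Real.cos t) : ℂ) * exp (I * n * t)) (n m : ℤ) :
    inner ℂ (f n) (f m) = oneAddCosCoeff (m - n) := by
  have hae : (fun t => inner ℂ (f n t) (f m t)) =ᵐ[μ]
      fun t => ((1 + Real.cos t : ℝ) : ℂ) * exp (I * (m - n : ℤ) * t) := by
    filter_upwards [hf n, hf m] with t hfn hfm
    have hsqrt : ((Real.sqrt (1 + Real.cos t) : ℝ) : ℂ) * (Real.sqrt (1 + Real.cos t) : ℝ) =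
        ((1 + Real.cos t : ℝ) : ℂ) := by
      rw [← ofReal_mul, Real.mul_self_sqrt (by linarith [Real.neg_one_le_cos t])]
    have hconj : conj (exp (I * n * t)) = exp (-(I * n * t)) := by
      rw [← exp_conj]
      simp
    rw [RCLike.inner_apply, hfn, hfm, map_mul, conj_ofReal, hconj, ← hsqrt]
    have hexp : exp (I * (m - n : ℤ) * t) = exp (I * m * t) * exp (-(I * n * t)) := by
      rw [← Complex.exp_add]
      push_cast
      ring_nf
    rw [hexp]
    ring
  rw [L2.inner_def, integral_congr_ae hae, hμ, integral_smul_measure,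
    ← intervalIntegral.integral_of_le two_pi_pos.le, integral_one_add_cos_mul_exp,
    ENNReal.toReal_ofReal (by positivity), Complex.real_smul]
  push_cast
  field_simp

end

section

open Finset

variable {E : Type*} [NormedAddCommGroup E] [InnerProductSpace ℂ E] {f : ℤ → E}

lemma norm_eq_one_of_inner_eq_oneAddCosCoeff
    (hf : ∀ n m, inner ℂ (f n) (f m) = oneAddCosCoeff (m - n)) (n : ℤ) : ‖f n‖ = 1 := by
  have h := inner_self_eq_norm_sq (𝕜 := ℂ) (f n)
  rw [hf, sub_self, oneAddCosCoeff_zero, RCLike.one_re] at h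
  exact (pow_eq_one_iff_of_nonneg (norm_nonneg _) two_ne_zero).1 h.symm

lemma norm_inner_le_half_of_inner_eq_oneAddCosCoeff
    (hf : ∀ n m, inner ℂ (f n) (f m) = oneAddCosCoeff (m - n)) {n m : ℤ} (hnm : n ≠ m) :
    ‖(inner ℂ (f n) (f m) : ℂ)‖ ≤ 1 / 2 := by
  rw [hf]
  exact norm_oneAddCosCoeff_le_half (sub_ne_zero.2 hnm.symm)

lemma norm_sum_smul_sq_le_two_mul_of_inner_eq_oneAddCosCoeff
    (hf : ∀ n m, inner ℂ (f n) (f m) = oneAddCosCoeff (m - n)) (s : Finset ℤ) (a : ℤ → ℂ) :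
    ‖∑ n ∈ s, a n • f n‖ ^ 2 ≤ 2 * ∑ n ∈ s, ‖a n‖ ^ 2 :=
  norm_sum_smul_sq_le_of_sum_norm_inner_le f s
    (fun n _ => by simpa only [hf] using sum_norm_oneAddCosCoeff_sub_le s n) a

lemma norm_sum_range_neg_one_pow_smul_of_inner_eq_oneAddCosCoeff
    (hf : ∀ n m, inner ℂ (f n) (f m) = oneAddCosCoeff (m - n)) (N : ℕ) :
    ‖∑ k ∈ range (N + 1), (-1 : ℂ) ^ k • f k‖ = 1 := by
  induction N with
  | zero => simpa using norm_eq_one_of_inner_eq_oneAddCosCoeff hf 0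
  | succ N ih =>
    set S := ∑ k ∈ range (N + 1), (-1 : ℂ) ^ k • f k
    have hcross : inner ℂ S ((-1 : ℂ) ^ (N + 1) • f (N + 1 : ℕ)) = -1 / 2 := by
      have hfar : ∀ k ∈ range N, (-1 : ℂ) ^ k * inner ℂ (f k) (f (N + 1 : ℕ)) = 0 := by
        intro k hk
        rw [hf, oneAddCosCoeff_of_two_le (by simp at hk; omega), mul_zero]
      simp only [S, inner_smul_right, sum_inner, inner_smul_left, map_pow, map_neg, map_one]
      rw [sum_range_succ, sum_eq_zero hfar, hf, show ((N + 1 : ℕ) : ℤ) - N = 1 by push_cast; ring,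
        oneAddCosCoeff_one, zero_add, ← mul_assoc, ← pow_add, Odd.neg_one_pow ⟨N, by ring⟩]
      ring
    have hnorm : ‖(-1 : ℂ) ^ (N + 1) • f (N + 1 : ℕ)‖ = 1 := by
      rw [norm_smul, norm_pow, norm_neg, norm_one, one_pow, one_mul,
        norm_eq_one_of_inner_eq_oneAddCosCoeff hf]
    rw [sum_range_succ, ← pow_eq_one_iff_of_nonneg (norm_nonneg _) two_ne_zero, @norm_add_sq ℂ,
      ih, hnorm, hcross]
    norm_num

lemma not_exists_lower_bound_of_inner_eq_oneAddCosCoeff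
    (hf : ∀ n m, inner ℂ (f n) (f m) = oneAddCosCoeff (m - n)) :
    ¬ ∃ A > 0, ∀ (s : Finset ℤ) (a : ℤ → ℂ),
        A * ∑ n ∈ s, ‖a n‖ ^ 2 ≤ ‖∑ n ∈ s, a n • f n‖ ^ 2 := by
  rintro ⟨A, hA, hlower⟩
  obtain ⟨N, hN⟩ := exists_nat_gt A⁻¹
  have h := hlower ((range (N + 1)).map Nat.castEmbedding) fun n => (-1) ^ n
  simp only [sum_map, Nat.castEmbedding_apply, zpow_natCast, norm_pow, norm_neg, norm_one,
    one_pow, sum_const, card_range, nsmul_eq_mul, mul_one,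
    norm_sum_range_neg_one_pow_smul_of_inner_eq_oneAddCosCoeff hf] at h
  rw [inv_lt_iff_one_lt_mul₀ hA] at hN
  push_cast at h
  linarith

end

theorem separated_bessel_not_riesz_example
    (μ : Measure ℝ)
    (hμ : μ = ENNReal.ofReal (1 / (2 * Real.pi)) •
      (volume.restrict (Set.Ioc (0 : ℝ) (2 * Real.pi))))
    (f : ℤ → Lp ℂ 2 μ)
    (hf : ∀ n : ℤ, (f n : ℝ → ℂ) =ᵐ[μ]
      fun t => (Real.sqrt (1 + Real.cos t) : ℂ) * Complex.exp (Complex.I * n * t)) :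
    (∀ n, ‖f n‖ = 1) ∧
    (∃ B > 0, ∀ (s : Finset ℤ) (a : ℤ → ℂ),
        ‖∑ n ∈ s, a n • f n‖ ^ 2 ≤ B * ∑ n ∈ s, ‖a n‖ ^ 2) ∧
    (∃ γ < (1 : ℝ), ∀ n m : ℤ, n ≠ m → ‖(inner ℂ (f n) (f m) : ℂ)‖ ≤ γ) ∧
    ¬ (∃ A > 0, ∀ (s : Finset ℤ) (a : ℤ → ℂ),
        A * ∑ n ∈ s, ‖a n‖ ^ 2 ≤ ‖∑ n ∈ s, a n • f n‖ ^ 2) := by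
  have hgram := inner_eq_oneAddCosCoeff μ hμ f hf
  exact ⟨norm_eq_one_of_inner_eq_oneAddCosCoeff hgram,
    ⟨2, two_pos, norm_sum_smul_sq_le_two_mul_of_inner_eq_oneAddCosCoeff hgram⟩,
    ⟨1 / 2, by norm_num, fun _ _ => norm_inner_le_half_of_inner_eq_oneAddCosCoeff hgram⟩,
    not_exists_lower_bound_of_inner_eq_oneAddCosCoeff hgram⟩
end

section
/- For reproducing kernel Hilbert spaces H and H' on Ω with the same underlying functions and equivalent norms, a sequence (λₙ) in Ω is separated with respect to the normalized kernels of H if and only if it is separated with respect to the normalized kernels of H'. -/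
/-!
The adjoint of the identity map `H → H'` carries each kernel `k'_λ` to `k_λ`, so it suffices to
show that separation is preserved by an isomorphism `T` of Hilbert spaces. Separation bounds the
squared sine of the angle between distinct vectors of the family from below, and
`‖u‖² sin² ∠(u, v)` is the squared distance from `u` to the line through `v`. Since `T` maps that
line onto the line through `T v`, this distance grows by at most the factor `‖T‖`, so the squared
sine changes by at most the factor `(‖T‖ ‖T⁻¹‖)²`.
-/

open ContinuousLinearMap

section

variable {𝕜 E F ι : Type*} [RCLike 𝕜] [NormedAddCommGroup E] [InnerProductSpace 𝕜 E]
  [NormedAddCommGroup F] [InnerProductSpace 𝕜 F]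

local notation "⟪" x ", " y "⟫" => inner 𝕜 x y

variable (𝕜) in
noncomputable def sinSqAngle (u v : E) : ℝ := 1 - (‖⟪u, v⟫‖ / (‖u‖ * ‖v‖)) ^ 2

theorem sinSqAngle_nonneg (u v : E) : 0 ≤ sinSqAngle 𝕜 u v := by
  have hle : ‖⟪u, v⟫‖ / (‖u‖ * ‖v‖) ≤ 1 :=
    div_le_one_of_le₀ (norm_inner_le_norm u v) (by positivity)
  rw [sinSqAngle, sub_nonneg]
  exact pow_le_one₀ (by positivity) hle

theorem norm_sub_starProjection_singleton_sq (u v : E) :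
    ‖u - (𝕜 ∙ v).starProjection u‖ ^ 2 = ‖u‖ ^ 2 * sinSqAngle 𝕜 u v := by
  have hproj : ‖(𝕜 ∙ v).starProjection u‖ = ‖⟪u, v⟫‖ / ‖v‖ := by
    rcases eq_or_ne v 0 with rfl | hv
    · simp
    rw [Submodule.starProjection_singleton, norm_smul, norm_div, RCLike.norm_ofReal,
      abs_of_nonneg (by positivity), norm_inner_symm]
    field_simp
  have hpyth := Submodule.norm_sq_eq_add_norm_sq_starProjection u (𝕜 ∙ v)
  rw [Submodule.starProjection_orthogonal', sub_apply, one_apply_eq_self, hproj] at hpyth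
  rcases eq_or_ne u 0 with rfl | hu
  · simp
  have hu' : ‖u‖ ≠ 0 := norm_ne_zero_iff.mpr hu
  rw [sinSqAngle, mul_comm ‖u‖, ← div_div]
  field_simp
  linear_combination -hpyth

theorem norm_sub_starProjection_map_le (T : E →L[𝕜] F) (u v : E) :
    ‖T u - (𝕜 ∙ T v).starProjection (T u)‖ ≤ ‖T‖ * ‖u - (𝕜 ∙ v).starProjection u‖ := by
  obtain ⟨c, hc⟩ := Submodule.mem_span_singleton.mp ((𝕜 ∙ v).starProjection_apply_mem u)
  have hmem : T ((𝕜 ∙ v).starProjection u) ∈ 𝕜 ∙ T v :=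
    Submodule.mem_span_singleton.mpr ⟨c, by rw [← hc, map_smul]⟩
  calc ‖T u - (𝕜 ∙ T v).starProjection (T u)‖ ≤ ‖T u - T ((𝕜 ∙ v).starProjection u)‖ := by
        rw [Submodule.starProjection_minimal]
        exact ciInf_le ⟨0, Set.forall_mem_range.mpr fun _ => norm_nonneg _⟩
          (⟨_, hmem⟩ : 𝕜 ∙ T v)
    _ ≤ ‖T‖ * ‖u - (𝕜 ∙ v).starProjection u‖ := by
        rw [← map_sub]
        exact T.le_opNorm _

theorem sinSqAngle_map_le (T : E ≃L[𝕜] F) {u : E} (hu : u ≠ 0) (v : E) :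
    sinSqAngle 𝕜 (T u) (T v) ≤
      (‖(T : E →L[𝕜] F)‖ * ‖(T.symm : F →L[𝕜] E)‖) ^ 2 * sinSqAngle 𝕜 u v := by
  have hTu : 0 < ‖T u‖ := norm_pos_iff.mpr (T.map_ne_zero_iff.mpr hu)
  have hu_le : ‖u‖ ≤ ‖(T.symm : F →L[𝕜] E)‖ * ‖T u‖ := by
    simpa using (T.symm : F →L[𝕜] E).le_opNorm (T u)
  have hdist := norm_sub_starProjection_map_le (T : E →L[𝕜] F) u v
  rw [← sq_le_sq₀ (norm_nonneg _) (by positivity), mul_pow,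
    norm_sub_starProjection_singleton_sq, norm_sub_starProjection_singleton_sq] at hdist
  have hsin := sinSqAngle_nonneg (𝕜 := 𝕜) u v
  rw [← mul_le_mul_iff_of_pos_left (pow_pos hTu 2)]
  calc ‖T u‖ ^ 2 * sinSqAngle 𝕜 (T u) (T v)
      ≤ ‖(T : E →L[𝕜] F)‖ ^ 2 * (‖u‖ ^ 2 * sinSqAngle 𝕜 u v) := by simpa using hdist
    _ ≤ ‖(T : E →L[𝕜] F)‖ ^ 2 * ((‖(T.symm : F →L[𝕜] E)‖ * ‖T u‖) ^ 2 * sinSqAngle 𝕜 u v) := by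
        gcongr
    _ = _ := by ring

variable (𝕜) in
def IsSeparated (u : ι → E) : Prop :=
  ∃ γ < (1 : ℝ), ∀ i j, i ≠ j → ‖⟪u i, u j⟫‖ / (‖u i‖ * ‖u j‖) ≤ γ

theorem isSeparated_iff_exists_pos_le_sinSqAngle (u : ι → E) :
    IsSeparated 𝕜 u ↔ ∃ ε > 0, ∀ i j, i ≠ j → ε ≤ sinSqAngle 𝕜 (u i) (u j) := by
  constructor
  · rintro ⟨γ, hγ, hsep⟩
    refine ⟨1 - max γ 0 ^ 2, by nlinarith [max_lt hγ one_pos, le_max_right γ 0],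
      fun i j hij => ?_⟩
    have hle : ‖⟪u i, u j⟫‖ / (‖u i‖ * ‖u j‖) ≤ max γ 0 :=
      (hsep i j hij).trans (le_max_left _ _)
    rw [sinSqAngle, sub_le_sub_iff_left]
    exact pow_le_pow_left₀ (by positivity) hle 2
  · rintro ⟨ε, hε, hsep⟩
    refine ⟨√(1 - ε), (Real.sqrt_lt' one_pos).mpr (by linarith), fun i j hij => ?_⟩
    refine Real.le_sqrt_of_sq_le ?_
    have hle := hsep i j hij
    rw [sinSqAngle] at hle
    linarith

theorem IsSeparated.of_map {u : ι → E} (T : E ≃L[𝕜] F) (hu : ∀ i, u i ≠ 0)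
    (h : IsSeparated 𝕜 (T ∘ u)) : IsSeparated 𝕜 u := by
  rw [isSeparated_iff_exists_pos_le_sinSqAngle] at h ⊢
  obtain ⟨ε, hε, hsep⟩ := h
  set K := (‖(T : E →L[𝕜] F)‖ * ‖(T.symm : F →L[𝕜] E)‖) ^ 2
  refine ⟨ε / (K + 1), by positivity, fun i j hij => ?_⟩
  have hsin := sinSqAngle_nonneg (𝕜 := 𝕜) (u i) (u j)
  rw [div_le_iff₀ (by positivity)]
  calc ε ≤ K * sinSqAngle 𝕜 (u i) (u j) := (hsep i j hij).trans (sinSqAngle_map_le T (hu i) _)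
    _ ≤ sinSqAngle 𝕜 (u i) (u j) * (K + 1) := by nlinarith

theorem isSeparated_comp_iff {u : ι → E} (T : E ≃L[𝕜] F) (hu : ∀ i, u i ≠ 0) :
    IsSeparated 𝕜 (T ∘ u) ↔ IsSeparated 𝕜 u :=
  ⟨IsSeparated.of_map T hu, fun h =>
    IsSeparated.of_map T.symm (fun i => T.map_ne_zero_iff.mpr (hu i))
      (by simpa [Function.comp_def] using h)⟩

theorem norm_inner_inv_norm_smul [Module ℝ E] [IsScalarTower ℝ 𝕜 E] (u v : E) :
    ‖⟪‖u‖⁻¹ • u, ‖v‖⁻¹ • v⟫‖ = ‖⟪u, v⟫‖ / (‖u‖ * ‖v‖) := by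
  rw [RCLike.real_smul_eq_coe_smul (K := 𝕜), RCLike.real_smul_eq_coe_smul (K := 𝕜),
    inner_smul_left, inner_smul_right, norm_mul, norm_mul, RCLike.norm_conj, RCLike.norm_ofReal,
    RCLike.norm_ofReal, abs_inv, abs_inv, abs_norm, abs_norm]
  field_simp

end

section

variable {𝕜 E F : Type*} [RCLike 𝕜] [NormedAddCommGroup E] [InnerProductSpace 𝕜 E]
  [CompleteSpace E] [NormedAddCommGroup F] [InnerProductSpace 𝕜 F] [CompleteSpace F]

noncomputable def ContinuousLinearEquiv.adjoint (A : E ≃L[𝕜] F) : F ≃L[𝕜] E :=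
  .equivOfInverse (ContinuousLinearMap.adjoint (A : E →L[𝕜] F))
    (ContinuousLinearMap.adjoint (A.symm : F →L[𝕜] E))
    (fun y => by rw [← comp_apply, ← adjoint_comp, A.coe_comp_coe_symm, adjoint_id, id_apply])
    (fun x => by rw [← comp_apply, ← adjoint_comp, A.coe_symm_comp_coe, adjoint_id, id_apply])

theorem ContinuousLinearEquiv.adjoint_apply (A : E ≃L[𝕜] F) (y : F) :
    A.adjoint y = ContinuousLinearMap.adjoint (A : E →L[𝕜] F) y :=
  rfl

end

theorem separated_invariant_under_renorming_general
    {Ω : Type*} {H H' : Type*}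
    [NormedAddCommGroup H] [InnerProductSpace ℂ H] [CompleteSpace H]
    [NormedAddCommGroup H'] [InnerProductSpace ℂ H'] [CompleteSpace H']
    (A : H ≃L[ℂ] H')
    (toFun : H →ₗ[ℂ] (Ω → ℂ)) (toFun' : H' →ₗ[ℂ] (Ω → ℂ))
    (hA : ∀ f : H, toFun' (A f) = toFun f)
    (k : Ω → H) (k' : Ω → H')
    (hk : ∀ (f : H) (lam : Ω), toFun f lam = (inner ℂ (k lam) f : ℂ))
    (hk' : ∀ (g : H') (lam : Ω), toFun' g lam = (inner ℂ (k' lam) g : ℂ))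
    (Λ : ℕ → Ω) (hΛ' : ∀ n, k' (Λ n) ≠ 0) :
    (∃ γ < (1 : ℝ), ∀ n m : ℕ, n ≠ m →
        ‖(inner ℂ (‖k (Λ n)‖⁻¹ • k (Λ n)) (‖k (Λ m)‖⁻¹ • k (Λ m)) : ℂ)‖ ≤ γ) ↔
    (∃ γ < (1 : ℝ), ∀ n m : ℕ, n ≠ m →
        ‖(inner ℂ (‖k' (Λ n)‖⁻¹ • k' (Λ n)) (‖k' (Λ m)‖⁻¹ • k' (Λ m)) : ℂ)‖ ≤ γ) := by
  have hkernel (lam : Ω) : A.adjoint (k' lam) = k lam :=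
    ext_inner_right ℂ fun f => by
      rw [A.adjoint_apply, adjoint_inner_left, A.coe_coe, ← hk', hA, hk]
  simp only [norm_inner_inv_norm_smul]
  change IsSeparated ℂ (k ∘ Λ) ↔ IsSeparated ℂ (k' ∘ Λ)
  rw [← isSeparated_comp_iff A.adjoint (u := k' ∘ Λ) hΛ']
  simp only [Function.comp_def, hkernel]

theorem separated_invariant_under_renorming
    {Ω : Type*} {H H' : Type*}
    [NormedAddCommGroup H] [InnerProductSpace ℂ H] [CompleteSpace H]
    [NormedAddCommGroup H'] [InnerProductSpace ℂ H'] [CompleteSpace H']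
    (A : H ≃L[ℂ] H')
    (toFun : H →ₗ[ℂ] (Ω → ℂ)) (toFun' : H' →ₗ[ℂ] (Ω → ℂ))
    (hA : ∀ f : H, toFun' (A f) = toFun f)
    (k : Ω → H) (k' : Ω → H')
    (hk : ∀ (f : H) (lam : Ω), toFun f lam = (inner ℂ (k lam) f : ℂ))
    (hk' : ∀ (g : H') (lam : Ω), toFun' g lam = (inner ℂ (k' lam) g : ℂ))
    (Λ : ℕ → Ω) (hΛ : ∀ n, k (Λ n) ≠ 0) (hΛ' : ∀ n, k' (Λ n) ≠ 0) :
    (∃ γ < (1 : ℝ), ∀ n m : ℕ, n ≠ m →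
        ‖(inner ℂ (‖k (Λ n)‖⁻¹ • k (Λ n)) (‖k (Λ m)‖⁻¹ • k (Λ m)) : ℂ)‖ ≤ γ) ↔
    (∃ γ < (1 : ℝ), ∀ n m : ℕ, n ≠ m →
        ‖(inner ℂ (‖k' (Λ n)‖⁻¹ • k' (Λ n)) (‖k' (Λ m)‖⁻¹ • k' (Λ m)) : ℂ)‖ ≤ γ) :=
  separated_invariant_under_renorming_general A toFun toFun' hA k k' hk hk' Λ hΛ'
end
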